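/- arXiv:2404.12924 — 2 statements merged into one kernel-verified Lean document; each statement's English description precedes it below -/
import Mathlib

section
/- Let X : Δᵒᵖ → Set be a continuous simplicial set. Then the relation ≤_X is a partial order on X₀: it is reflexive, transitive, and antisymmetric. -/
/-!
Reflexivity is witnessed by degenerate edges. In `Δ`, the simplex `⦋2⦌` is the pushout of two
copies of `⦋1⦌` glued end to start, and `⦋0⦌` is the coequalizer of the first and last vertex
`⦋0⦌ ⇉ ⦋n⦌` (a monotone map identifying the endpoints of `⦋n⦌` is constant). A continuous `X`
turns these into a pullback and an equalizer of sets: every composable pair of edges is filled by a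
2-simplex, whose long edge gives transitivity, and a 2-simplex with vertices `x, y, x` is totally
degenerate, which forces `x = y`.
-/

open CategoryTheory Limits Opposite

/-- A simplicial set `X : Δᵒᵖ ⥤ Type` is *continuous* if it preserves all limits that
exist in `Δᵒᵖ`; equivalently, it takes colimits in `Δ` to limits in `Set`. -/
def IsContinuousSSet (X : SimplexCategoryᵒᵖ ⥤ Type) : Prop :=
  ∀ ⦃J : Type⦄ [SmallCategory J] (D : J ⥤ SimplexCategoryᵒᵖ) (c : Cone D),
    Nonempty (IsLimit c) → Nonempty (IsLimit (X.mapCone c))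

/-- The relation `≤_X` on the `0`-simplices of a simplicial set `X`:
`x ≤_X y` iff there is a `1`-simplex `f` with `d₁ f = x` and `d₀ f = y`. -/
def sSetLe (X : SimplexCategoryᵒᵖ ⥤ Type) (x y : X.obj (op (SimplexCategory.mk 0))) : Prop :=
  ∃ f : X.obj (op (SimplexCategory.mk 1)),
    X.map (SimplexCategory.δ 1).op f = x ∧ X.map (SimplexCategory.δ 0).op f = y

open SimplexCategory Simplicial

namespace SimplexCategory

lemma isPushout_δ_one_δ_zero : IsPushout (δ 1 : ⦋0⦌ ⟶ ⦋1⦌) (δ 0) (δ 0) (δ 2) := by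
  refine ⟨⟨Hom.ext_zero_left _ _⟩, ⟨PushoutCocone.IsColimit.mk _
    (fun s => mkOfLeComp (s.inr.toOrderHom 0) (s.inr.toOrderHom 1) (s.inl.toOrderHom 1)
      (s.inr.toOrderHom.monotone (by decide))
      ((congr_toOrderHom_apply s.condition 0).symm.trans_le
        (s.inl.toOrderHom.monotone (by decide)))) ?_ ?_ ?_⟩⟩
  · intro s
    exact Hom.ext_one_left _ _ (congr_toOrderHom_apply s.condition 0).symm
  · intro s
    exact Hom.ext_one_left _ _
  · intro s m hl hr
    ext i : 3
    fin_cases i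
    · exact congr_toOrderHom_apply hr 0
    · exact congr_toOrderHom_apply hr 1
    · exact congr_toOrderHom_apply hl 1

lemma eq_const_of_apply_zero_eq_last {n : ℕ} {m : SimplexCategory} (f : ⦋n⦌ ⟶ m)
    (h : f.toOrderHom 0 = f.toOrderHom (Fin.last n)) : f = const _ _ (f.toOrderHom 0) := by
  ext i : 3
  exact le_antisymm (h ▸ f.toOrderHom.monotone (Fin.le_last i))
    (f.toOrderHom.monotone (Fin.zero_le i))

def isColimitConstCofork (n : ℕ) :
    IsColimit (Cofork.ofπ (const ⦋n⦌ ⦋0⦌ 0)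
      (isTerminalZero.hom_ext _ _ : const ⦋0⦌ ⦋n⦌ 0 ≫ _ = const ⦋0⦌ ⦋n⦌ (Fin.last n) ≫ _)) :=
  Cofork.IsColimit.mk _ (fun s => const _ _ (s.π.toOrderHom 0))
    (fun s => (eq_const_of_apply_zero_eq_last s.π
      (congr_toOrderHom_apply s.condition 0)).symm)
    (fun s m hm => by
      rw [eq_const_of_zero m, ← hm]
      rfl)

end SimplexCategory

lemma map_op_apply_eq_self_of_zero (X : SimplexCategoryᵒᵖ ⥤ Type) (φ : ⦋0⦌ ⟶ ⦋0⦌)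
    (x : X.obj (op ⦋0⦌)) : X.map φ.op x = x := by
  rw [isTerminalZero.hom_ext φ (𝟙 _), op_id, Functor.map_id_apply]

lemma map_op_vertex_congr (X : SimplexCategoryᵒᵖ ⥤ Type) {n : ℕ} {φ ψ : ⦋0⦌ ⟶ ⦋n⦌}
    (s : X.obj (op ⦋n⦌)) (h : φ.toOrderHom 0 = ψ.toOrderHom 0 := by rfl) :
    X.map φ.op s = X.map ψ.op s := by
  rw [Hom.ext_zero_left φ ψ h]

lemma sSetLe_refl (X : SimplexCategoryᵒᵖ ⥤ Type) (x : X.obj (op ⦋0⦌)) : sSetLe X x x :=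
  ⟨X.map (σ 0).op x, by
    simp only [← Functor.map_comp_apply, ← op_comp, map_op_apply_eq_self_of_zero,
      and_self]⟩

namespace IsContinuousSSet

variable {X : SimplexCategoryᵒᵖ ⥤ Type} (hX : IsContinuousSSet X)
include hX

lemma isPullback_map {P A B C : SimplexCategoryᵒᵖ} {fst : P ⟶ A} {snd : P ⟶ B} {f : A ⟶ C}
    {g : B ⟶ C} (h : IsPullback fst snd f g) :
    IsPullback (X.map fst) (X.map snd) (X.map f) (X.map g) :=
  have := preservesLimit_of_preserves_limit_cone h.isLimit (hX _ _ ⟨h.isLimit⟩).some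
  h.map X

lemma isLimit_fork_map {A B C : SimplexCategoryᵒᵖ} {f g : B ⟶ C} {ι : A ⟶ B}
    (w : ι ≫ f = ι ≫ g) (h : IsLimit (Fork.ofι ι w)) :
    Nonempty (IsLimit (Fork.ofι (X.map ι) (by simp only [← X.map_comp, w]) :
      Fork (X.map f) (X.map g))) :=
  ⟨isLimitMapConeForkEquiv X w (hX _ _ ⟨h⟩).some⟩

lemma exists_filler_horn_two_one (f g : X.obj (op ⦋1⦌))
    (h : X.map (δ 0).op f = X.map (δ 1).op g) :
    ∃ t : X.obj (op ⦋2⦌), X.map (δ 2).op t = f ∧ X.map (δ 0).op t = g :=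
  Types.exists_of_isPullback (hX.isPullback_map isPushout_δ_one_δ_zero.op) f g h

lemma exists_eq_const_of_vertex_zero_eq_last {n : ℕ} (s : X.obj (op ⦋n⦌))
    (h : X.map (const ⦋0⦌ ⦋n⦌ 0).op s = X.map (const ⦋0⦌ ⦋n⦌ (Fin.last n)).op s) :
    ∃ x : X.obj (op ⦋0⦌), X.map (const ⦋n⦌ ⦋0⦌ 0).op x = s :=
  ((Types.type_equalizer_iff_unique _ _).1 (hX.isLimit_fork_map _
    (Cofork.isColimitOfπEquivIsLimitOp _ _ _
      (congrArg Quiver.Hom.op (isTerminalZero.hom_ext _ _)) rfl (isColimitConstCofork n)))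
    s h).exists

lemma sSetLe_trans {x y z : X.obj (op ⦋0⦌)} (hxy : sSetLe X x y) (hyz : sSetLe X y z) :
    sSetLe X x z := by
  obtain ⟨f, rfl, rfl⟩ := hxy
  obtain ⟨g, hg₁, rfl⟩ := hyz
  obtain ⟨t, rfl, rfl⟩ := hX.exists_filler_horn_two_one f g hg₁.symm
  refine ⟨X.map (δ 1).op t, ?_, ?_⟩
  all_goals
    simp only [← Functor.map_comp_apply, ← op_comp]
    exact map_op_vertex_congr X t

lemma sSetLe_antisymm {x y : X.obj (op ⦋0⦌)} (hxy : sSetLe X x y) (hyx : sSetLe X y x) :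
    x = y := by
  obtain ⟨f, rfl, rfl⟩ := hxy
  obtain ⟨g, hg₁, hg₀⟩ := hyx
  obtain ⟨t, rfl, rfl⟩ := hX.exists_filler_horn_two_one f g hg₁.symm
  have hvertex : X.map (const ⦋0⦌ ⦋2⦌ 0).op t = X.map (const ⦋0⦌ ⦋2⦌ (Fin.last 2)).op t := by
    rw [map_op_vertex_congr X t (φ := const _ _ 0) (ψ := δ 1 ≫ δ 2),
      map_op_vertex_congr X t (φ := const _ _ (Fin.last 2)) (ψ := δ 0 ≫ δ 0)]
    simpa only [← Functor.map_comp_apply, ← op_comp] using hg₀.symm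
  obtain ⟨w, rfl⟩ := hX.exists_eq_const_of_vertex_zero_eq_last t hvertex
  simp only [← Functor.map_comp_apply, ← op_comp, map_op_apply_eq_self_of_zero]

end IsContinuousSSet

/-- Let `X : Δᵒᵖ → Set` be a continuous simplicial set. Then the
relation `≤_X` is a partial order on `X₀`: it is reflexive, transitive, and
antisymmetric. -/
theorem sSetLe_is_partial_order (X : SimplexCategoryᵒᵖ ⥤ Type) (hX : IsContinuousSSet X) :
    Reflexive (sSetLe X) ∧ Transitive (sSetLe X) ∧
      (∀ x y, sSetLe X x y → sSetLe X y x → x = y) :=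
  ⟨sSetLe_refl X, fun _ _ _ => hX.sSetLe_trans, fun _ _ => hX.sSetLe_antisymm⟩
end

section
/- Let C be a cocomplete category and i : Δ ↪ Pos the full inclusion. If G, H : Pos → C are colimit-preserving functors and there is a natural isomorphism i ⋙ G ≅ i ⋙ H, then G ≅ H. -/
open CategoryTheory Limits

universe v u

/-- The full inclusion `i : Δ ↪ Pos` of the simplex category into the category of
partially ordered sets, sending `[n]` to the poset `{0, …, n}`. -/
def deltaToPartOrd : SimplexCategory ⥤ PartOrd where
  obj n := PartOrd.of (Fin (n.len + 1))
  map f := PartOrd.ofHom f.toOrderHom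

/-!
`Δ` is dense in `Pos`: a poset is the colimit of its simplices, and a cocone over that diagram is
already determined by its values on vertices, which are monotone because of the edges `[1] → X`.
A functor preserving these canonical colimits is therefore the pointwise left Kan extension of its
restriction to `Δ`, and left Kan extensions of isomorphic functors are isomorphic.
-/

namespace CategoryTheory.Functor

variable {A B C : Type*} [Category* A] [Category* B] [Category* C]

lemma isLeftKanExtension_of_isDense (F : A ⥤ B) [F.IsDense] (G : B ⥤ C)
    [∀ Y, PreservesColimit (CostructuredArrow.proj F Y ⋙ F) G] :
    G.IsLeftKanExtension (𝟙 (F ⋙ G)) := by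
  let E := (LeftExtension.postcompose₂ F F G).obj (.mk (𝟭 B) F.rightUnitor.inv)
  have : E.right.IsLeftKanExtension E.hom :=
    LeftExtension.IsPointwiseLeftKanExtension.isLeftKanExtension
      fun Y ↦ (F.denseAt Y).postcompose G
  exact isLeftKanExtension_of_iso (F' := E.right) G.leftUnitor E.hom _
    (by
      ext
      simp only [E, comp_obj, NatTrans.comp_app, LeftExtension.postcompose₂_obj_right_obj,
        LeftExtension.postcompose₂_obj_hom_app, LeftExtension.mk_hom, rightUnitor_inv_app,
        whiskerLeft_app, leftUnitor_hom_app, NatTrans.id_app]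
      exact (Category.comp_id _).trans (G.map_id _))

noncomputable def IsDense.isoOfCompIso (F : A ⥤ B) [F.IsDense] {G H : B ⥤ C}
    [∀ Y, PreservesColimit (CostructuredArrow.proj F Y ⋙ F) G]
    [∀ Y, PreservesColimit (CostructuredArrow.proj F Y ⋙ F) H]
    (e : F ⋙ G ≅ F ⋙ H) : G ≅ H :=
  have := isLeftKanExtension_of_isDense F G
  have := isLeftKanExtension_of_isDense F H
  leftKanExtensionUniqueOfIso G (𝟙 _) e H (𝟙 _)

end CategoryTheory.Functor

open Simplicial

namespace deltaToPartOrd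

def vertex {X : PartOrd} (x : X) : CostructuredArrow deltaToPartOrd X :=
  CostructuredArrow.mk (Y := ⦋0⦌) (PartOrd.ofHom (OrderHom.const _ x))

def edge {X : PartOrd} {x y : X} (h : x ≤ y) : CostructuredArrow deltaToPartOrd X :=
  CostructuredArrow.mk (Y := ⦋1⦌) (PartOrd.ofHom ⟨![x, y], monotone_vecEmpty.vecCons h⟩)

variable {X : PartOrd} (s : Cocone (CostructuredArrow.proj deltaToPartOrd X ⋙ deltaToPartOrd))

def evalVertex (x : X) : s.pt := s.ι.app (vertex x) (0 : Fin 1)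

lemma evalVertex_apply (j : CostructuredArrow deltaToPartOrd X) (i : Fin (j.left.len + 1)) :
    evalVertex s (j.hom i) = s.ι.app j i := by
  let f : vertex (j.hom i) ⟶ j :=
    CostructuredArrow.homMk (SimplexCategory.const _ _ i) (by ext; rfl)
  exact congr($(s.w f) (0 : Fin 1)).symm

lemma monotone_evalVertex : Monotone (evalVertex s) := fun _ _ h ↦
  ((evalVertex_apply s (edge h) 0).trans_le
    ((s.ι.app (edge h)).hom.monotone (Fin.zero_le 1))).trans_eq
    (evalVertex_apply s (edge h) 1).symm

end deltaToPartOrd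

open deltaToPartOrd in
noncomputable def denseAtDeltaToPartOrd (X : PartOrd) : deltaToPartOrd.DenseAt X where
  desc s := PartOrd.ofHom ⟨evalVertex s, monotone_evalVertex s⟩
  fac s j := by ext i; exact evalVertex_apply s j i
  uniq s m hm := by ext x; exact congr($(hm (vertex x)) (0 : Fin 1))

instance : deltaToPartOrd.IsDense where
  isDenseAt X := ⟨denseAtDeltaToPartOrd X⟩

theorem cocontinuous_extension_unique_general
    {C : Type u} [Category.{v} C] (G H : PartOrd ⥤ C)
    (hG : ∀ ⦃J : Type⦄ [SmallCategory J] (D : J ⥤ PartOrd) (c : Cocone D),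
      Nonempty (IsColimit c) → Nonempty (IsColimit (G.mapCocone c)))
    (hH : ∀ ⦃J : Type⦄ [SmallCategory J] (D : J ⥤ PartOrd) (c : Cocone D),
      Nonempty (IsColimit c) → Nonempty (IsColimit (H.mapCocone c)))
    (e : deltaToPartOrd ⋙ G ≅ deltaToPartOrd ⋙ H) :
    Nonempty (G ≅ H) := by
  have (X : PartOrd) :
      PreservesColimit (CostructuredArrow.proj deltaToPartOrd X ⋙ deltaToPartOrd) G :=
    preservesColimit_of_preserves_colimit_cocone (denseAtDeltaToPartOrd X)
      (hG _ _ ⟨denseAtDeltaToPartOrd X⟩).some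
  have (X : PartOrd) :
      PreservesColimit (CostructuredArrow.proj deltaToPartOrd X ⋙ deltaToPartOrd) H :=
    preservesColimit_of_preserves_colimit_cocone (denseAtDeltaToPartOrd X)
      (hH _ _ ⟨denseAtDeltaToPartOrd X⟩).some
  exact ⟨Functor.IsDense.isoOfCompIso deltaToPartOrd e⟩

/-- Let `C` be a cocomplete category and `i : Δ ↪ Pos` the full
inclusion. If `G, H : Pos → C` are colimit-preserving functors and there is a natural
isomorphism `i ⋙ G ≅ i ⋙ H`, then `G ≅ H`. -/
theorem cocontinuous_extension_unique
    {C : Type u} [Category.{v} C] [HasColimits C] (G H : PartOrd ⥤ C)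
    (hG : ∀ ⦃J : Type⦄ [SmallCategory J] (D : J ⥤ PartOrd) (c : Cocone D),
      Nonempty (IsColimit c) → Nonempty (IsColimit (G.mapCocone c)))
    (hH : ∀ ⦃J : Type⦄ [SmallCategory J] (D : J ⥤ PartOrd) (c : Cocone D),
      Nonempty (IsColimit c) → Nonempty (IsColimit (H.mapCocone c)))
    (e : deltaToPartOrd ⋙ G ≅ deltaToPartOrd ⋙ H) :
    Nonempty (G ≅ H) :=
  cocontinuous_extension_unique_general G H hG hH e
end
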